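/- arXiv:0712.4051 — 5 statements merged into one kernel-verified Lean document; each statement's English description precedes it below -/
import Mathlib

section
/- (Bruhat decomposition for GL_2) Let B be the subgroup of upper triangular invertible 2×2 matrices over F_q and let w = [[0,1],[-1,0]]. Then GL_2(F_q) is the disjoint union of B and BwB. -/
open Matrix

section BruhatGL2

variable {R : Type*} [CommRing R]

theorem Matrix.GeneralLinearGroup.isUnit_apply_of_apply_one_zero_eq_zero
    {b : GL (Fin 2) R} (hb : (b : Matrix (Fin 2) (Fin 2) R) 1 0 = 0) :
    IsUnit ((b : Matrix (Fin 2) (Fin 2) R) 0 0) ∧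
      IsUnit ((b : Matrix (Fin 2) (Fin 2) R) 1 1) := by
  have hdet : IsUnit (b : Matrix (Fin 2) (Fin 2) R).det :=
    (Matrix.isUnit_iff_isUnit_det _).mp b.isUnit
  rw [det_fin_two, hb, mul_zero, sub_zero] at hdet
  exact IsUnit.mul_iff.mp hdet

theorem Matrix.mul_weyl_mul_apply_one_zero {b₁ b₂ : Matrix (Fin 2) (Fin 2) R}
    (h₁ : b₁ 1 0 = 0) (h₂ : b₂ 1 0 = 0) :
    (b₁ * !![(0 : R), 1; -1, 0] * b₂) 1 0 = -(b₁ 1 1 * b₂ 0 0) := by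
  simp [mul_apply, Fin.sum_univ_two, h₁, h₂]

theorem Matrix.GeneralLinearGroup.isUnit_apply_one_zero_of_eq_mul_weyl_mul
    {g b₁ b₂ : GL (Fin 2) R}
    (h₁ : (b₁ : Matrix (Fin 2) (Fin 2) R) 1 0 = 0)
    (h₂ : (b₂ : Matrix (Fin 2) (Fin 2) R) 1 0 = 0)
    (hg : (g : Matrix (Fin 2) (Fin 2) R) =
      (b₁ : Matrix (Fin 2) (Fin 2) R) * !![(0 : R), 1; -1, 0] *
        (b₂ : Matrix (Fin 2) (Fin 2) R)) :
    IsUnit ((g : Matrix (Fin 2) (Fin 2) R) 1 0) := by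
  rw [hg, mul_weyl_mul_apply_one_zero h₁ h₂, IsUnit.neg_iff]
  exact (isUnit_apply_of_apply_one_zero_eq_zero h₁).2.mul
    (isUnit_apply_of_apply_one_zero_eq_zero h₂).1

/-- For `g = !![a, b; c, d]` with `c` a unit,
`g = !![-det g * c⁻¹, a * c⁻¹; 0, 1] * w * !![-c, -d; 0, 1]`. -/
theorem Matrix.GeneralLinearGroup.exists_eq_mul_weyl_mul_of_isUnit_apply_one_zero
    (g : GL (Fin 2) R) (hc : IsUnit ((g : Matrix (Fin 2) (Fin 2) R) 1 0)) :
    ∃ b₁ b₂ : GL (Fin 2) R,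
      (b₁ : Matrix (Fin 2) (Fin 2) R) 1 0 = 0 ∧ (b₂ : Matrix (Fin 2) (Fin 2) R) 1 0 = 0 ∧
      (g : Matrix (Fin 2) (Fin 2) R) =
        (b₁ : Matrix (Fin 2) (Fin 2) R) * !![(0 : R), 1; -1, 0] *
          (b₂ : Matrix (Fin 2) (Fin 2) R) := by
  obtain ⟨c, hc⟩ := hc
  set A := (g : Matrix (Fin 2) (Fin 2) R)
  have hdet : IsUnit A.det := (Matrix.isUnit_iff_isUnit_det _).mp g.isUnit
  refine ⟨mk'' !![-A.det * ↑c⁻¹, A 0 0 * ↑c⁻¹; 0, 1] ?_,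
    mk'' !![-(c : R), -A 1 1; 0, 1] ?_, rfl, rfl, ?_⟩
  · simpa [det_fin_two_of] using hdet.mul c⁻¹.isUnit
  · simp [det_fin_two_of]
  · ext i j
    fin_cases i <;> fin_cases j <;> simp [mul_apply, Fin.sum_univ_two, det_fin_two, ← hc]
    linear_combination -A 0 1 * c.mul_inv

end BruhatGL2

theorem bruhat_decomposition_GL2_general (F : Type) [Field F] (g : GL (Fin 2) F) :
    (g : Matrix (Fin 2) (Fin 2) F) 1 0 = 0 ↔
      ¬ ∃ b₁ b₂ : GL (Fin 2) F,
          (b₁ : Matrix (Fin 2) (Fin 2) F) 1 0 = 0 ∧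
          (b₂ : Matrix (Fin 2) (Fin 2) F) 1 0 = 0 ∧
          (g : Matrix (Fin 2) (Fin 2) F) =
            (b₁ : Matrix (Fin 2) (Fin 2) F) * !![(0 : F), 1; -1, 0] *
              (b₂ : Matrix (Fin 2) (Fin 2) F) := by
  constructor
  · rintro hg ⟨b₁, b₂, h₁, h₂, hfac⟩
    have hunit := GeneralLinearGroup.isUnit_apply_one_zero_of_eq_mul_weyl_mul h₁ h₂ hfac
    exact not_isUnit_zero (hg ▸ hunit)
  · intro hcell
    by_contra hg
    exact hcell (GeneralLinearGroup.exists_eq_mul_weyl_mul_of_isUnit_apply_one_zero g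
      (isUnit_iff_ne_zero.mpr hg))

/-- Bruhat decomposition for `GL₂(F_q)`: with `B` the upper triangular invertible
matrices and `w = !![0,1;-1,0]`, the group is the disjoint union of `B` and `BwB`.
An element lies in `B` if and only if it does not lie in `BwB`. -/
theorem bruhat_decomposition_GL2 (F : Type) [Field F] [Fintype F] (g : GL (Fin 2) F) :
    (g : Matrix (Fin 2) (Fin 2) F) 1 0 = 0 ↔
      ¬ ∃ b₁ b₂ : GL (Fin 2) F,
          (b₁ : Matrix (Fin 2) (Fin 2) F) 1 0 = 0 ∧
          (b₂ : Matrix (Fin 2) (Fin 2) F) 1 0 = 0 ∧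
          (g : Matrix (Fin 2) (Fin 2) F) =
            (b₁ : Matrix (Fin 2) (Fin 2) F) * !![(0 : F), 1; -1, 0] *
              (b₂ : Matrix (Fin 2) (Fin 2) F) :=
  bruhat_decomposition_GL2_general F g
end

section
/- Let G be a finite group, H a normal subgroup, and π an irreducible representation of H. Then the induced representation Ind_H^G π is irreducible if and only if for every x ∉ H, the conjugate representation ˣπ (defined by ˣπ(h) = π(x⁻¹hx)) is not isomorphic to π. -/
/-- A representation is irreducible: the space is nonzero and the only invariant
submodules are `⊥` and `⊤`. -/
def IsIrrep {G : Type} [Monoid G] {V : Type} [AddCommGroup V] [Module ℂ V]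
    (ρ : Representation ℂ G V) : Prop :=
  (∃ v : V, v ≠ 0) ∧
  ∀ W : Submodule ℂ V, (∀ (g : G) (v : V), v ∈ W → ρ g v ∈ W) → W = ⊥ ∨ W = ⊤

/-- The space of the representation induced from `π : H → GL(V)`:
functions `f : G → V` with `f (h * g) = π h (f g)`. -/
def IndSpace (G : Type) [Group G] (H : Subgroup G) (V : Type) [AddCommGroup V]
    [Module ℂ V] (π : Representation ℂ H V) : Submodule ℂ (G → V) where
  carrier := {f | ∀ (h : H) (g : G), f (↑h * g) = π h (f g)}
  add_mem' := by
    intro a b ha hb h g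
    simp only [Pi.add_apply, ha h g, hb h g, map_add]
  zero_mem' := by
    intro h g
    simp
  smul_mem' := by
    intro c a ha h g
    simp [ha h g]

/-- The induced representation `Ind_H^G π`, acting by right translation. -/
def IndRep (G : Type) [Group G] (H : Subgroup G) (V : Type) [AddCommGroup V]
    [Module ℂ V] (π : Representation ℂ H V) :
    Representation ℂ G (IndSpace G H V π) where
  toFun g :=
    { toFun := fun f => ⟨fun x => (f : G → V) (x * g), fun h x => by
        show (f : G → V) (↑h * x * g) = π h ((f : G → V) (x * g))
        rw [mul_assoc]; exact f.2 h (x * g)⟩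
      map_add' := fun a b => by ext x; rfl
      map_smul' := fun c a => by ext x; rfl }
  map_one' := by
    apply LinearMap.ext; intro f; apply Subtype.ext; funext x; simp
  map_mul' := fun g₁ g₂ => by
    apply LinearMap.ext; intro f; apply Subtype.ext; funext x
    simp [mul_assoc]

/-- The homomorphism `h ↦ x⁻¹ h x` of a normal subgroup. -/
def conjHom {G : Type} [Group G] (H : Subgroup G) (hH : H.Normal) (x : G) :
    H →* H where
  toFun h := ⟨x⁻¹ * ↑h * x, by simpa using hH.conj_mem _ h.2 x⁻¹⟩
  map_one' := by ext; simp
  map_mul' := fun a b => by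
    ext
    simp only [Subgroup.coe_mul, MulMemClass.mk_mul_mk]
    group

/-!
Over `ℂ`, Schur's lemma and Maschke's theorem say that a representation of a finite group is
irreducible iff its only self-intertwiners are the scalars. Let `single v` be the section of
`Ind π` supported on `H` with value `v` at `1`; its translates span `Ind π`, so a self-intertwiner
`T` is determined by its Mackey kernel `x ↦ (v ↦ T (single v) x)`. The kernel is determined on
each coset `H x` by its value at `x`, and that value intertwines `ˣπ` with `π`. So if no `ˣπ` with
`x ∉ H` is isomorphic to `π`, Schur's lemma kills the kernel off `H` and makes it scalar at `1`,
whence `T` is scalar. Conversely an isomorphism `e : ˣπ ≅ π` gives the intertwiner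
`f ↦ e ∘ f ∘ (x⁻¹ * ·)`, which is not scalar since it moves `single v` off `H`.
-/

open Representation

section Irreducibility

variable {G V : Type} [AddCommGroup V] [Module ℂ V]

theorem isIrrep_iff_isIrreducible [Monoid G] (ρ : Representation ℂ G V) :
    IsIrrep ρ ↔ ρ.IsIrreducible := by
  have hinj := Subrepresentation.toSubmodule_injective (ρ := ρ)
  rw [Representation.IsIrreducible, isSimpleOrder_iff, IsIrrep]
  refine and_congr ?_ ⟨fun h S => ?_, fun h W hW => ?_⟩
  · rw [← nontrivial_iff_exists_ne 0, ← Submodule.nontrivial_iff ℂ,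
      ← not_subsingleton_iff_nontrivial, ← not_subsingleton_iff_nontrivial,
      ← subsingleton_iff_bot_eq_top, ← subsingleton_iff_bot_eq_top, ← hinj.eq_iff]
    rfl
  · rw [← hinj.eq_iff, ← hinj.eq_iff]
    exact h S.toSubmodule S.apply_mem_toSubmodule
  · exact (h ⟨W, hW⟩).imp (congrArg Subrepresentation.toSubmodule)
      (congrArg Subrepresentation.toSubmodule)

theorem IsIrrep.comp [Monoid G] {G' : Type} [Monoid G'] {ρ : Representation ℂ G V}
    (hρ : IsIrrep ρ) {f : G' →* G} (hf : Function.Surjective f) : IsIrrep (ρ.comp f) :=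
  ⟨hρ.1, fun W hW => hρ.2 W fun g v hv => by
    obtain ⟨g', rfl⟩ := hf g
    exact hW g' v hv⟩

theorem IsIrrep.bijective_or_eq_zero [Monoid G] {W : Type} [AddCommGroup W] [Module ℂ W]
    {ρ : Representation ℂ G V} {σ : Representation ℂ G W} (hρ : IsIrrep ρ) (hσ : IsIrrep σ)
    (T : V →ₗ[ℂ] W) (hT : ∀ g v, T (ρ g v) = σ g (T v)) :
    Function.Bijective T ∨ T = 0 := by
  have := (isIrrep_iff_isIrreducible ρ).1 hρ
  have := (isIrrep_iff_isIrreducible σ).1 hσ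
  exact (IsIrreducible.bijective_or_eq_zero
    (T.intertwiningMap_of_isIntertwiningMap ρ σ hT)).imp_right
      (congrArg IntertwiningMap.toLinearMap)

theorem IsIrrep.exists_eq_smul_id [Monoid G] [FiniteDimensional ℂ V]
    {ρ : Representation ℂ G V} (hρ : IsIrrep ρ) (T : V →ₗ[ℂ] V)
    (hT : ∀ g v, T (ρ g v) = ρ g (T v)) :
    ∃ μ : ℂ, T = μ • LinearMap.id := by
  have := (isIrrep_iff_isIrreducible ρ).1 hρ
  obtain ⟨μ, hμ⟩ := IsIrreducible.algebraMap_intertwiningMap_bijective_of_isAlgClosed.2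
    (T.intertwiningMap_of_isIntertwiningMap ρ ρ hT)
  exact ⟨μ, LinearMap.ext fun v => (DFunLike.congr_fun hμ v).symm⟩

theorem isIrrep_of_forall_eq_smul_id [Group G] [Finite G] {ρ : Representation ℂ G V}
    (hV : ∃ v : V, v ≠ 0)
    (hscalar : ∀ T : V →ₗ[ℂ] V, (∀ g v, T (ρ g v) = ρ g (T v)) →
      ∃ μ : ℂ, T = μ • LinearMap.id) :
    IsIrrep ρ := by
  refine ⟨hV, fun W hW => ?_⟩
  -- Maschke's theorem provides the invariant complement `U`.
  obtain ⟨U, hU⟩ := exists_isCompl (⟨W, hW⟩ : Subrepresentation ρ)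
  have hWU : IsCompl W U.toSubmodule :=
    ⟨disjoint_iff.2 (congrArg Subrepresentation.toSubmodule hU.inf_eq_bot),
      codisjoint_iff.2 (congrArg Subrepresentation.toSubmodule hU.sup_eq_top)⟩
  have hP := Submodule.isIdempotentElem_projection hWU
  obtain ⟨μ, hμ⟩ := hscalar (W.projection U.toSubmodule hWU) fun g v => by
    refine LinearMap.congr_fun
      ((LinearMap.IsIdempotentElem.commute_iff (T := ρ g) hP).2 ⟨?_, ?_⟩).eq v
    · rw [Submodule.range_projection]
      exact fun w hw => hW g w hw
    · rw [Submodule.ker_projection]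
      exact fun u hu => U.apply_mem_toSubmodule g hu
  obtain ⟨v, hv⟩ := hV
  have hμidem : IsIdempotentElem μ := by
    refine smul_left_injective ℂ hv ?_
    simpa [hμ, mul_smul] using LinearMap.congr_fun hP.eq v
  rw [← Submodule.range_projection hWU, hμ]
  rcases IsIdempotentElem.iff_eq_zero_or_one.1 hμidem with rfl | rfl <;> simp

end Irreducibility

section Conjugation

variable {G : Type} [Group G] {H : Subgroup G} (hH : H.Normal)

theorem coe_conjHom (x : G) (h : H) : (conjHom H hH x h : G) = x⁻¹ * h * x := rfl

theorem conjHom_surjective (x : G) : Function.Surjective (conjHom H hH x) :=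
  fun h => ⟨conjHom H hH x⁻¹ h, Subtype.ext (by simp [coe_conjHom, mul_assoc])⟩

theorem conjHom_one : conjHom H hH 1 = MonoidHom.id H := by
  ext h
  simp [coe_conjHom]

end Conjugation

section Induced

variable {G : Type} [Group G] {H : Subgroup G} {V : Type} [AddCommGroup V] [Module ℂ V]
  {π : Representation ℂ H V}

theorem indRep_apply (g : G) (f : IndSpace G H V π) (y : G) :
    (IndRep G H V π g f).1 y = f.1 (y * g) := rfl

namespace IndSpace

@[ext]
theorem ext {f₁ f₂ : IndSpace G H V π} (h : ∀ y, f₁.1 y = f₂.1 y) : f₁ = f₂ :=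
  Subtype.ext (funext h)

variable (π) in
open Classical in
noncomputable def single : V →ₗ[ℂ] IndSpace G H V π where
  toFun v := ⟨fun y => if hy : y ∈ H then π ⟨y, hy⟩ v else 0, fun h g => by
    dsimp only
    by_cases hg : g ∈ H
    · rw [dif_pos hg, dif_pos (H.mul_mem h.2 hg), ← Module.End.mul_apply, ← map_mul]
      rfl
    · rw [dif_neg hg, dif_neg (mt (H.mul_mem_cancel_left h.2).1 hg), map_zero]⟩
  map_add' v w := by
    ext y
    by_cases hy : y ∈ H <;> simp [hy]
  map_smul' c v := by
    ext y
    by_cases hy : y ∈ H <;> simp [hy]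

theorem single_apply_of_mem (v : V) {y : G} (hy : y ∈ H) :
    (single π v).1 y = π ⟨y, hy⟩ v :=
  dif_pos hy

theorem single_apply_of_notMem (v : V) {y : G} (hy : y ∉ H) : (single π v).1 y = 0 :=
  dif_neg hy

theorem single_apply_one (v : V) : (single π v).1 1 = v := by
  rw [single_apply_of_mem v H.one_mem]
  exact LinearMap.congr_fun π.map_one v

theorem single_injective : Function.Injective (single π) := fun v w hvw => by
  rw [← single_apply_one (π := π) v, hvw, single_apply_one]

theorem single_rep (h : H) (v : V) : single π (π h v) = IndRep G H V π h (single π v) := by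
  ext y
  rw [indRep_apply]
  by_cases hy : y ∈ H
  · rw [single_apply_of_mem _ hy, single_apply_of_mem _ (H.mul_mem hy h.2),
      ← Module.End.mul_apply, ← map_mul]
    rfl
  · rw [single_apply_of_notMem _ hy,
      single_apply_of_notMem _ (mt (H.mul_mem_cancel_right h.2).1 hy)]

theorem sum_indRep_single [Fintype G] (f : IndSpace G H V π) :
    ∑ g, IndRep G H V π g⁻¹ (single π (f.1 g)) = Nat.card H • f := by
  classical
  ext y
  have hterm : ∀ k : G, (single π (f.1 (k⁻¹ * y))).1 k = if k ∈ H then f.1 y else 0 := by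
    intro k
    split_ifs with hk
    · rw [single_apply_of_mem _ hk, ← f.2, mul_inv_cancel_left]
    · exact single_apply_of_notMem _ hk
  rw [← ((Equiv.inv G).trans (Equiv.mulRight y)).sum_comp]
  simp [indRep_apply, hterm, Finset.sum_ite, Fintype.card_subtype]

theorem intertwining_ext [Finite G] {W : Type} [AddCommGroup W] [Module ℂ W]
    {σ : Representation ℂ G W} {S T : IndSpace G H V π →ₗ[ℂ] W}
    (hS : ∀ g f, S (IndRep G H V π g f) = σ g (S f))
    (hT : ∀ g f, T (IndRep G H V π g f) = σ g (T f))
    (h : ∀ v, S (single π v) = T (single π v)) : S = T := by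
  have := Fintype.ofFinite G
  ext f
  refine smul_right_injective W (Nat.cast_ne_zero.2 Nat.card_pos.ne' : (Nat.card H : ℂ) ≠ 0) ?_
  simp only [Nat.cast_smul_eq_nsmul, ← map_nsmul, ← sum_indRep_single, map_sum, hS, hT, h]

noncomputable def mackeyKernel (T : IndSpace G H V π →ₗ[ℂ] IndSpace G H V π) (x : G) :
    V →ₗ[ℂ] V :=
  LinearMap.proj x ∘ₗ (IndSpace G H V π).subtype ∘ₗ T ∘ₗ single π

theorem mackeyKernel_apply (T : IndSpace G H V π →ₗ[ℂ] IndSpace G H V π) (x : G) (v : V) :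
    mackeyKernel T x v = (T (single π v)).1 x := rfl

theorem mackeyKernel_conj {T : IndSpace G H V π →ₗ[ℂ] IndSpace G H V π}
    (hT : ∀ g f, T (IndRep G H V π g f) = IndRep G H V π g (T f)) (hH : H.Normal) (x : G) (h : H)
    (v : V) :
    mackeyKernel T x (π (conjHom H hH x h) v) = π h (mackeyKernel T x v) := by
  have hconj : x * conjHom H hH x h = h * x := by
    rw [coe_conjHom, ← mul_assoc, ← mul_assoc, mul_inv_cancel, one_mul]
  rw [mackeyKernel_apply, single_rep, hT, indRep_apply, hconj, (T (single π v)).2]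
  rfl

theorem eq_smul_id_of_mackeyKernel [Finite G] {T : IndSpace G H V π →ₗ[ℂ] IndSpace G H V π}
    (hT : ∀ g f, T (IndRep G H V π g f) = IndRep G H V π g (T f)) {μ : ℂ}
    (h1 : mackeyKernel T 1 = μ • LinearMap.id) (hout : ∀ x ∉ H, mackeyKernel T x = 0) :
    T = μ • LinearMap.id := by
  refine intertwining_ext hT (by simp) fun v => ?_
  ext y
  rw [LinearMap.smul_apply, LinearMap.id_apply, Submodule.coe_smul, Pi.smul_apply]
  by_cases hy : y ∈ H
  · calc (T (single π v)).1 y = π ⟨y, hy⟩ ((T (single π v)).1 1) := by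
          simpa using (T (single π v)).2 ⟨y, hy⟩ 1
      _ = μ • (single π v).1 y := by
          rw [← mackeyKernel_apply, h1, single_apply_of_mem _ hy]
          exact map_smul _ μ v
  · rw [← mackeyKernel_apply, hout y hy, single_apply_of_notMem _ hy, smul_zero]
    rfl

section ConjTranslate

variable (hH : H.Normal) (x : G) (e : V →ₗ[ℂ] V)
  (he : ∀ h v, e (π (conjHom H hH x h) v) = π h (e v))

noncomputable def conjTranslate : IndSpace G H V π →ₗ[ℂ] IndSpace G H V π where
  toFun f := ⟨fun y => e (f.1 (x⁻¹ * y)), fun h g => by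
    have hconj : x⁻¹ * (h * g) = conjHom H hH x h * (x⁻¹ * g) := by
      rw [coe_conjHom]
      group
    dsimp only
    rw [hconj, f.2, he]⟩
  map_add' f₁ f₂ := by
    ext y
    exact map_add e _ _
  map_smul' c f := by
    ext y
    exact map_smul e c _

theorem conjTranslate_apply (f : IndSpace G H V π) (y : G) :
    (conjTranslate hH x e he f).1 y = e (f.1 (x⁻¹ * y)) := rfl

theorem conjTranslate_indRep (g : G) (f : IndSpace G H V π) :
    conjTranslate hH x e he (IndRep G H V π g f) =
      IndRep G H V π g (conjTranslate hH x e he f) := by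
  ext y
  simp only [conjTranslate_apply, indRep_apply, mul_assoc]

theorem mackeyKernel_conjTranslate : mackeyKernel (conjTranslate hH x e he) x = e := by
  ext v
  rw [mackeyKernel_apply, conjTranslate_apply, inv_mul_cancel, single_apply_one]

end ConjTranslate

end IndSpace

end Induced

/-- Mackey's irreducibility criterion for a normal subgroup: for `H ⊴ G` and `π`
an irreducible representation of `H`, the induced representation `π^G` is
irreducible iff for every `x ∉ H` the conjugate representation `ˣπ`
(given by `h ↦ π (x⁻¹ h x)`) is not isomorphic to `π`. -/
theorem induced_irreducible_iff (G : Type) [Group G] [Finite G] (H : Subgroup G)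
    (hH : H.Normal) (V : Type) [AddCommGroup V] [Module ℂ V]
    [FiniteDimensional ℂ V] (π : Representation ℂ H V) (hπ : IsIrrep π) :
    IsIrrep (IndRep G H V π) ↔
      ∀ x : G, x ∉ H →
        ¬ ∃ e : V ≃ₗ[ℂ] V, ∀ (h : H) (v : V),
            e (π (conjHom H hH x h) v) = π h (e v) := by
  obtain ⟨v, hv⟩ := hπ.1
  constructor
  · rintro hInd x hx ⟨e, he⟩
    obtain ⟨μ, hμ⟩ :=
      hInd.exists_eq_smul_id _ (IndSpace.conjTranslate_indRep hH x e.toLinearMap he)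
    have hev : e v = μ • (IndSpace.single π v).1 x := by
      change (e : V →ₗ[ℂ] V) v = _
      rw [← IndSpace.mackeyKernel_conjTranslate hH x e.toLinearMap he, hμ]
      rfl
    rw [IndSpace.single_apply_of_notMem v hx, smul_zero, e.map_eq_zero_iff] at hev
    exact hv hev
  · intro hnoniso
    refine isIrrep_of_forall_eq_smul_id
      ⟨IndSpace.single π v, (map_ne_zero_iff _ IndSpace.single_injective).2 hv⟩ fun T hT => ?_
    have hout : ∀ x ∉ H, IndSpace.mackeyKernel T x = 0 := fun x hx =>
      ((hπ.comp (conjHom_surjective hH x)).bijective_or_eq_zero hπ _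
        (IndSpace.mackeyKernel_conj hT hH x)).resolve_left fun hbij =>
          hnoniso x hx ⟨LinearEquiv.ofBijective _ hbij, IndSpace.mackeyKernel_conj hT hH x⟩
    obtain ⟨μ, hμ⟩ := hπ.exists_eq_smul_id (IndSpace.mackeyKernel T 1) (by
      simpa only [conjHom_one, MonoidHom.id_apply] using IndSpace.mackeyKernel_conj hT hH 1)
    exact ⟨μ, IndSpace.eq_smul_id_of_mackeyKernel hT hμ hout⟩
end

section
/- Let G be a finite group, N an abelian normal subgroup, ρ an irreducible representation of G, χ a character of N with V_χ ≠ 0, and G_χ the stabilizer of χ in G. Then ρ is isomorphic to the representation of G induced from the representation of G_χ on V_χ. -/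
open MulAction

section CharacterSums

variable {N V : Type} [Group N] [AddCommGroup V] [Module ℂ V]

def charSpace (σ : Representation ℂ N V) (ψ : N →* ℂˣ) : Submodule ℂ V where
  carrier := {v | ∀ n, σ n v = (ψ n : ℂ) • v}
  add_mem' hv hw n := by simp [hv n, hw n]
  zero_mem' n := by simp
  smul_mem' c v hv n := by simp [hv n, smul_comm c]

open Classical in
theorem sum_char_inv_smul_of_mem_charSpace [Fintype N] (σ : Representation ℂ N V)
    (ψ ψ' : N →* ℂˣ) {v : V} (hv : v ∈ charSpace σ ψ') :
    ∑ n, (ψ n⁻¹ : ℂ) • σ n v = if ψ = ψ' then Fintype.card N • v else 0 := by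
  have hψ : (Units.coeHom ℂ).comp (ψ⁻¹ * ψ') = 1 ↔ ψ = ψ' := by
    refine ⟨fun h => ?_, fun h => MonoidHom.ext fun n => by simp [h]⟩
    rw [← inv_mul_eq_one]
    exact MonoidHom.ext fun n => Units.ext (DFunLike.congr_fun h n)
  calc ∑ n, (ψ n⁻¹ : ℂ) • σ n v = (∑ n, (Units.coeHom ℂ).comp (ψ⁻¹ * ψ') n) • v := by
        simp [hv _, smul_smul, Finset.sum_smul]
    _ = _ := by rw [sum_hom_units]; split_ifs <;> simp_all [Nat.cast_smul_eq_nsmul]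

end CharacterSums

section ConjugateCharacters

variable {G : Type} [Group G] {N : Subgroup G} [N.Normal]

instance {M : Type} [Monoid M] : MulAction G (N →* M) where
  smul g χ := χ.comp (MulAut.conjNormal g⁻¹).toMonoidHom
  one_smul χ := MonoidHom.ext fun n => by
    change χ (MulAut.conjNormal 1⁻¹ n) = χ n
    simp
  mul_smul a b χ := MonoidHom.ext fun n => by
    change χ (MulAut.conjNormal (a * b)⁻¹ n) =
      χ (MulAut.conjNormal b⁻¹ (MulAut.conjNormal a⁻¹ n))
    rw [mul_inv_rev, map_mul]
    rfl

theorem conj_smul_apply {M : Type} [Monoid M] (g : G) (χ : N →* M) (n : N) :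
    (g • χ) n = χ ⟨g⁻¹ * n * g, by simpa using ‹N.Normal›.conj_mem n n.2 g⁻¹⟩ :=
  congrArg χ (Subtype.ext (by simp))

theorem mul_inv_mem_stabilizer_iff {α : Type} [MulAction G α] {a : α} {x g : G} :
    x * g⁻¹ ∈ stabilizer G a ↔ g⁻¹ • a = x⁻¹ • a := by
  rw [mem_stabilizer_iff, mul_smul, smul_eq_iff_eq_inv_smul]

theorem Representation.apply_mem_charSpace {V : Type} [AddCommGroup V] [Module ℂ V]
    (ρ : Representation ℂ G V) {χ : N →* ℂˣ} {v : V} (hv : v ∈ charSpace (ρ.comp N.subtype) χ)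
    (g : G) : ρ g v ∈ charSpace (ρ.comp N.subtype) (g • χ) := by
  intro n
  have hv' := hv ⟨g⁻¹ * n * g, by simpa using ‹N.Normal›.conj_mem n n.2 g⁻¹⟩
  simp only [MonoidHom.comp_apply, Subgroup.coe_subtype] at hv' ⊢
  rw [conj_smul_apply, ← map_smul, ← hv', ← Module.End.mul_apply, ← map_mul,
    ← Module.End.mul_apply, ← map_mul]
  group

end ConjugateCharacters

section Induced

variable {G V : Type} [Group G] [AddCommGroup V] [Module ℂ V] {H : Subgroup G}
  {W : Submodule ℂ V}

open Classical in
noncomputable def IndSpace.single_s11 (π : Representation ℂ H W) (w : W) : IndSpace G H W π :=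
  ⟨fun x => if hx : x ∈ H then π ⟨x, hx⟩ w else 0, fun h y => by
    by_cases hy : y ∈ H
    · have hhy : (h : G) * y ∈ H := H.mul_mem h.2 hy
      simp only [hy, hhy, dite_true, ← Module.End.mul_apply, ← map_mul]
      rfl
    · have hhy : (h : G) * y ∉ H := fun hc => hy (by simpa using H.mul_mem (H.inv_mem h.2) hc)
      simp [hy, hhy]⟩

theorem rep_inv_apply_eq_of_mul_inv_mem {ρ : Representation ℂ G V} {π : Representation ℂ H W}
    (hπ : ∀ h w, (π h w : V) = ρ h w) (f : IndSpace G H W π) {x g : G} (hxg : x * g⁻¹ ∈ H) :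
    ρ x⁻¹ ((f : G → W) x) = ρ g⁻¹ ((f : G → W) g) := by
  have hf := f.2 ⟨x * g⁻¹, hxg⟩ g
  simp only [inv_mul_cancel_right] at hf
  rw [hf, hπ, ← Module.End.mul_apply, ← map_mul]
  simp

variable [Fintype G] (ρ : Representation ℂ G V) (π : Representation ℂ H W)

noncomputable def indToRep : IndSpace G H W π →ₗ[ℂ] V where
  toFun f := ∑ x, ρ x⁻¹ ((f : G → W) x)
  map_add' f f' := by simp [Finset.sum_add_distrib]
  map_smul' c f := by simp [Finset.smul_sum]

theorem indToRep_apply (f : IndSpace G H W π) :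
    indToRep ρ π f = ∑ x, ρ x⁻¹ ((f : G → W) x) := rfl

theorem indToRep_indRep (g : G) (f : IndSpace G H W π) :
    indToRep ρ π (IndRep G H W π g f) = ρ g (indToRep ρ π f) := by
  rw [indToRep_apply, indToRep_apply, map_sum]
  refine Fintype.sum_equiv (Equiv.mulRight g) _ _ fun x => ?_
  change ρ x⁻¹ _ = ρ g (ρ (x * g)⁻¹ _)
  rw [← Module.End.mul_apply, ← map_mul, mul_inv_rev, mul_inv_cancel_left]
  rfl

variable {ρ π}

theorem indToRep_single (hπ : ∀ h w, (π h w : V) = ρ h w) (w : W) :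
    indToRep ρ π (IndSpace.single_s11 π w) = (Nat.card H : ℂ) • (w : V) := by
  classical
  have hterm (x : G) :
      ρ x⁻¹ ((IndSpace.single_s11 π w : G → W) x) = if x ∈ H then (w : V) else 0 := by
    by_cases hx : x ∈ H
    · simp [IndSpace.single_s11, hx, hπ, ← Module.End.mul_apply, ← map_mul]
    · simp [IndSpace.single_s11, hx]
  rw [indToRep_apply, Finset.sum_congr rfl fun x _ => hterm x]
  simp [Finset.sum_ite, Fintype.card_subtype, Nat.cast_smul_eq_nsmul]

theorem indToRep_surjective (hπ : ∀ h w, (π h w : V) = ρ h w) (hρ : IsIrrep ρ) (hW : W ≠ ⊥) :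
    Function.Surjective (indToRep ρ π) := by
  have hinv (g : G) (v : V) (hv : v ∈ LinearMap.range (indToRep ρ π)) :
      ρ g v ∈ LinearMap.range (indToRep ρ π) := by
    obtain ⟨f, rfl⟩ := hv
    exact ⟨IndRep G H W π g f, indToRep_indRep ρ π g f⟩
  refine LinearMap.range_eq_top.mp ((hρ.2 _ hinv).resolve_left fun hbot => hW ?_)
  rw [eq_bot_iff]
  intro w hw
  have := LinearMap.mem_range_self (indToRep ρ π) (IndSpace.single_s11 π ⟨w, hw⟩)
  rw [hbot, Submodule.mem_bot, indToRep_single hπ] at this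
  rw [Submodule.mem_bot]
  exact (smul_eq_zero.mp this).resolve_left (Nat.cast_ne_zero.2 Nat.card_pos.ne')

end Induced

section Stabilizer

variable {G V : Type} [Group G] [Fintype G] [AddCommGroup V] [Module ℂ V]
  {ρ : Representation ℂ G V} {N : Subgroup G} [N.Normal] {χ : N →* ℂˣ}
  {W : Submodule ℂ V} {π : Representation ℂ (stabilizer G χ) W}

theorem sum_char_inv_smul_indToRep [Fintype N] (hW : W ≤ charSpace (ρ.comp N.subtype) χ)
    (hπ : ∀ h w, (π h w : V) = ρ h w) (f : IndSpace G (stabilizer G χ) W π) (g : G) :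
    ∑ n : N, ((g⁻¹ • χ) n⁻¹ : ℂ) • ρ n (indToRep ρ π f)
      = (Fintype.card N * Nat.card (stabilizer G χ) : ℂ) • ρ g⁻¹ ((f : G → W) g) := by
  classical
  have hF (x : G) : ρ x⁻¹ ((f : G → W) x) ∈ charSpace (ρ.comp N.subtype) (x⁻¹ • χ) :=
    ρ.apply_mem_charSpace (hW ((f : G → W) x).2) x⁻¹
  calc ∑ n : N, ((g⁻¹ • χ) n⁻¹ : ℂ) • ρ n (indToRep ρ π f)
      = ∑ x, ∑ n : N, ((g⁻¹ • χ) n⁻¹ : ℂ) • (ρ.comp N.subtype) n (ρ x⁻¹ ((f : G → W) x)) := by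
        rw [indToRep_apply, Finset.sum_comm]
        simp [Finset.smul_sum]
    _ = ∑ x, if x * g⁻¹ ∈ stabilizer G χ then
          (Fintype.card N : ℂ) • ρ g⁻¹ ((f : G → W) g) else 0 := by
        refine Finset.sum_congr rfl fun x _ => ?_
        rw [sum_char_inv_smul_of_mem_charSpace _ _ _ (hF x)]
        by_cases hx : x * g⁻¹ ∈ stabilizer G χ
        · rw [if_pos (mul_inv_mem_stabilizer_iff.1 hx), if_pos hx,
            rep_inv_apply_eq_of_mul_inv_mem hπ f hx, Nat.cast_smul_eq_nsmul]
        · rw [if_neg (mt mul_inv_mem_stabilizer_iff.2 hx), if_neg hx]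
    _ = ∑ y, if y ∈ stabilizer G χ then
          (Fintype.card N : ℂ) • ρ g⁻¹ ((f : G → W) g) else 0 :=
        Fintype.sum_equiv (Equiv.mulRight g⁻¹) _ _ fun x => rfl
    _ = _ := by
        simp [Finset.sum_ite, Fintype.card_subtype, Nat.cast_smul_eq_nsmul, mul_smul]
        exact smul_comm _ _ _

theorem indToRep_injective (hW : W ≤ charSpace (ρ.comp N.subtype) χ)
    (hπ : ∀ h w, (π h w : V) = ρ h w) : Function.Injective (indToRep ρ π) := by
  classical
  refine (injective_iff_map_eq_zero _).2 fun f hf => Subtype.ext (funext fun g => ?_)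
  have hfg : ρ g⁻¹ ((f : G → W) g) = 0 := by
    have h := sum_char_inv_smul_indToRep hW hπ f g
    simp only [hf, map_zero, smul_zero, Finset.sum_const_zero] at h
    refine (smul_eq_zero.1 h.symm).resolve_left (mul_ne_zero ?_ ?_)
    exacts [Nat.cast_ne_zero.2 Fintype.card_ne_zero, Nat.cast_ne_zero.2 Nat.card_pos.ne']
  simpa using (map_eq_zero_iff _ (ρ.apply_bijective g⁻¹).1).1 hfg

end Stabilizer

/-- Mackey's imprimitivity theorem: with `N ⊴ G` abelian, `ρ` irreducible, `χ` a
character of `N` with nonzero eigenspace `V_χ`, `G_χ` the stabilizer of `χ`, and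
`ρ_χ` the representation of `G_χ` on `V_χ` obtained by restricting `ρ`, the
representation `ρ` is isomorphic to `Ind_{G_χ}^G ρ_χ`. -/
theorem mackey_imprimitivity (G : Type) [Group G] [Finite G] (N : Subgroup G)
    (hN : N.Normal) (V : Type) [AddCommGroup V]
    [Module ℂ V] (ρ : Representation ℂ G V)
    (hirr : IsIrrep ρ) (χ : N →* ℂˣ)
    (Vχ : Submodule ℂ V)
    (hVχ : ∀ v : V, v ∈ Vχ ↔ ∀ n : N, ρ ↑n v = (χ n : ℂ) • v)
    (hne : Vχ ≠ ⊥)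
    (Gχ : Subgroup G)
    (hGχ : ∀ g : G, g ∈ Gχ ↔ ∀ n : N,
        χ ⟨g⁻¹ * ↑n * g, by simpa using hN.conj_mem _ n.2 g⁻¹⟩ = χ n)
    (ρχ : Representation ℂ Gχ Vχ)
    (hρχ : ∀ (g : Gχ) (v : Vχ), (ρχ g v : V) = ρ ↑g ↑v) :
    ∃ e : V ≃ₗ[ℂ] IndSpace G Gχ Vχ ρχ,
      ∀ (g : G) (v : V), e (ρ g v) = IndRep G Gχ Vχ ρχ g (e v) := by
  have := Fintype.ofFinite G
  have hVχ' : Vχ = charSpace (ρ.comp N.subtype) χ := Submodule.ext hVχ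
  have hGχ' : Gχ = stabilizer G χ := by
    ext g
    rw [hGχ, mem_stabilizer_iff, MonoidHom.ext_iff]
    simp only [conj_smul_apply]
  subst hGχ'
  let e := LinearEquiv.ofBijective (indToRep ρ ρχ)
    ⟨indToRep_injective hVχ'.le hρχ, indToRep_surjective hρχ hirr hne⟩
  refine ⟨e.symm, fun g v => e.symm_apply_eq.2 ?_⟩
  change _ = indToRep ρ ρχ _
  rw [indToRep_indRep]
  exact congrArg (ρ g) (e.apply_symm_apply v).symm
end

section
/- The Heisenberg representation of the Heisenberg group H(G) of a finite abelian group G on L²(G), given by (η̃(x',χ',z')f)(x) = z' χ'(x - x') f(x - x'), is irreducible; and every irreducible representation of H(G) on which the center U(1) acts by the identity character is isomorphic to it. -/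
/-- The Heisenberg group of a finite abelian group `G`: underlying set
`G × Ĝ × U(1)` (with the circle replaced by `ℂˣ`), multiplication
`(x,χ,z)(x',χ',z') = (x+x', χχ', zz'·χ x')`. -/
abbrev Heis (G : Type) [AddCommGroup G] : Type := G × AddChar G ℂˣ × ℂˣ

instance Heis.instMul (G : Type) [AddCommGroup G] : Mul (Heis G) :=
  ⟨fun a b => (a.1 + b.1, a.2.1 * b.2.1, a.2.2 * b.2.2 * a.2.1 b.1)⟩

instance Heis.instOne (G : Type) [AddCommGroup G] : One (Heis G) :=
  ⟨(0, 1, 1)⟩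

instance Heis.instInv (G : Type) [AddCommGroup G] : Inv (Heis G) :=
  ⟨fun a => (-a.1, a.2.1⁻¹, a.2.2⁻¹ * a.2.1 a.1)⟩

instance Heis.instGroup (G : Type) [AddCommGroup G] : Group (Heis G) :=
  Group.ofLeftAxioms
    (fun a b c => by
      refine Prod.ext (add_assoc _ _ _) (Prod.ext (mul_assoc _ _ _) ?_)
      show a.2.2 * b.2.2 * a.2.1 b.1 * c.2.2 * (a.2.1 * b.2.1) c.1 =
        a.2.2 * (b.2.2 * c.2.2 * b.2.1 c.1) * a.2.1 (b.1 + c.1)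
      rw [AddChar.mul_apply, AddChar.map_add_eq_mul]
      simp only [mul_comm, mul_left_comm, mul_assoc])
    (fun a => by
      show ((0 : G) + a.1, (1 : AddChar G ℂˣ) * a.2.1,
          1 * a.2.2 * (1 : AddChar G ℂˣ) a.1) = a
      refine Prod.ext ?_ (Prod.ext ?_ ?_)
      · exact zero_add a.1
      · exact one_mul a.2.1
      · simp)
    (fun a => by
      show (-a.1 + a.1, a.2.1⁻¹ * a.2.1,
          a.2.2⁻¹ * a.2.1 a.1 * a.2.2 * a.2.1⁻¹ a.1) = ((0 : G), 1, 1)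
      have h : a.2.1⁻¹ a.1 = (a.2.1 a.1)⁻¹ := by
        rw [AddChar.inv_apply, AddChar.map_neg_eq_inv]
      rw [h]
      refine Prod.ext ?_ (Prod.ext ?_ ?_)
      · exact neg_add_cancel a.1
      · exact inv_mul_cancel a.2.1
      · simp [mul_comm, mul_left_comm, mul_assoc])

/-- The Heisenberg representation of `Heis G` on `L²(G)`:
`(η̃ (x',χ',z') f) x = z' · χ' (x - x') · f (x - x')`. -/
def heisRep (G : Type) [AddCommGroup G] : Representation ℂ (Heis G) (G → ℂ) where
  toFun g :=
    { toFun := fun f x => (g.2.2 : ℂ) * ((g.2.1 (x - g.1) : ℂˣ) : ℂ) * f (x - g.1)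
      map_add' := fun a b => by funext x; simp [Pi.add_apply]; ring
      map_smul' := fun c a => by funext x; simp [Pi.smul_apply, smul_eq_mul]; ring }
  map_one' := by
    apply LinearMap.ext; intro f; funext x
    show ((1 : ℂˣ) : ℂ) * (((1 : AddChar G ℂˣ) (x - 0) : ℂˣ) : ℂ) * f (x - 0) = f x
    simp
  map_mul' g₁ g₂ := by
    apply LinearMap.ext; intro f; funext x
    show ((g₁.2.2 * g₂.2.2 * g₁.2.1 g₂.1 : ℂˣ) : ℂ) *
        (((g₁.2.1 * g₂.2.1) (x - (g₁.1 + g₂.1)) : ℂˣ) : ℂ) * f (x - (g₁.1 + g₂.1)) =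
      (g₁.2.2 : ℂ) * ((g₁.2.1 (x - g₁.1) : ℂˣ) : ℂ) *
        ((g₂.2.2 : ℂ) * ((g₂.2.1 (x - g₁.1 - g₂.1) : ℂˣ) : ℂ) * f (x - g₁.1 - g₂.1))
    have h1 : x - g₁.1 = (x - g₁.1 - g₂.1) + g₂.1 := by abel
    have h2 : x - (g₁.1 + g₂.1) = x - g₁.1 - g₂.1 := by abel
    have h3 : g₁.2.1 g₂.1 * g₁.2.1 (x - g₁.1 - g₂.1) = g₁.2.1 (x - g₁.1) := by
      rw [← AddChar.map_add_eq_mul]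
      congr 1
      abel
    rw [h2, AddChar.mul_apply, ← h3]
    push_cast
    ring


/-!
Write `M χ = σ (0, χ, 1)` and `T x = σ (x, 1, 1)`. Since the centre acts by scalars,
`T (-x) ∘ M χ ∘ T x = χ x • M χ`, so by orthogonality of characters the sum over `x` of
`T (-x) ∘ (∑ χ, M χ) ∘ T x` is `|G| • id`. Hence every nonzero invariant subspace contains a
nonzero vector fixed by all `M χ`. In `L²(G)` such a vector is a multiple of `δ₀`, whose
translates span; this gives irreducibility. In an irreducible `σ`, such a vector `w₀` gives the
intertwiner `f ↦ ∑ x, f x • T x w₀` from `L²(G)`, which is nonzero and hence bijective by Schur.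
-/

namespace AddChar

instance instFiniteUnits {A R : Type*} [AddMonoid A] [Monoid R] [Finite (AddChar A R)] :
    Finite (AddChar A Rˣ) :=
  Finite.of_injective _ ((Units.coeHom R).compAddChar_injective_right Units.val_injective)

lemma sum_coe_units_eq_zero {A R : Type*} [AddGroup A] [Fintype A] [CommRing R] [IsDomain R]
    {χ : AddChar A Rˣ} (hχ : χ ≠ 1) : ∑ a, (χ a : R) = 0 := by
  obtain ⟨b, hb⟩ := ne_one_iff.1 hχ
  refine eq_zero_of_mul_eq_self_left (Units.val_eq_one.not.2 hb) ?_
  rw [Finset.mul_sum]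
  exact Fintype.sum_equiv (Equiv.addLeft b) _ _ fun a ↦ by simp [map_add_eq_mul]

lemma exists_units_apply_ne_one {A M : Type*} [AddCommGroup A] [Finite A] [CommMonoid M]
    [HasEnoughRootsOfUnity M (Monoid.exponent (Multiplicative A))] {a : A} (ha : a ≠ 0) :
    ∃ χ : AddChar A Mˣ, χ a ≠ 1 := by
  obtain ⟨φ, hφ⟩ := CommGroup.exists_apply_ne_one_of_hasEnoughRootsOfUnity (Multiplicative A) M
    (a := Multiplicative.ofAdd a) ha
  exact ⟨toMonoidHomEquiv.symm φ, hφ⟩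

end AddChar

theorem IsIrrep.bijective_of_intertwining {H V V' : Type} [Monoid H] [AddCommGroup V]
    [Module ℂ V] [AddCommGroup V'] [Module ℂ V'] {ρ : Representation ℂ H V}
    {σ : Representation ℂ H V'} (hρ : IsIrrep ρ) (hσ : IsIrrep σ) {E : V →ₗ[ℂ] V'}
    (hE : ∀ g v, E (ρ g v) = σ g (E v)) (hE₀ : E ≠ 0) : Function.Bijective E := by
  constructor
  · refine (hρ.2 (LinearMap.ker E) fun g v hv ↦ ?_).elim LinearMap.ker_eq_bot.1
      fun h ↦ (hE₀ (LinearMap.ker_eq_top.1 h)).elim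
    rw [LinearMap.mem_ker] at hv ⊢
    rw [hE, hv, map_zero]
  · refine (hσ.2 (LinearMap.range E) ?_).elim (fun h ↦ (hE₀ (LinearMap.range_eq_bot.1 h)).elim)
      LinearMap.range_eq_top.1
    rintro g _ ⟨v, rfl⟩
    exact ⟨ρ g v, hE g v⟩

namespace Heis

variable {G : Type} [AddCommGroup G]

@[simp]
lemma mk_mul_mk (x x' : G) (χ χ' : AddChar G ℂˣ) (z z' : ℂˣ) :
    ((x, χ, z) * (x', χ', z') : Heis G) = (x + x', χ * χ', z * z' * χ x') := rfl

variable {W : Type} [AddCommGroup W] [Module ℂ W] (σ : Representation ℂ (Heis G) W)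

lemma map_modulation_map_modulation (χ χ' : AddChar G ℂˣ) (w : W) :
    σ (0, χ, 1) (σ (0, χ', 1) w) = σ (0, χ * χ', 1) w := by
  rw [← Module.End.mul_apply, ← map_mul, mk_mul_mk]
  simp

section CentralCharacter

variable {σ} (hz : ∀ (z : ℂˣ) (w : W), σ (0, 1, z) w = (z : ℂ) • w)
include hz

lemma map_mk_eq_smul (x : G) (χ : AddChar G ℂˣ) (z : ℂˣ) (w : W) :
    σ (x, χ, z) w = (z : ℂ) • σ (x, χ, 1) w := by
  rw [← hz, ← Module.End.mul_apply, ← map_mul, mk_mul_mk]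
  -- The `1` of `AddChar.instOne` and that of `AddChar.instCommGroup` agree only after unfolding,
  -- so `simp` needs `one_mul` instantiated.
  simp [one_mul χ]

lemma map_translation_neg_map_modulation_map_translation (x : G) (χ : AddChar G ℂˣ) (w : W) :
    σ (-x, 1, 1) (σ (0, χ, 1) (σ (x, 1, 1) w)) = (χ x : ℂ) • σ (0, χ, 1) w := by
  have h : ((-x, 1, 1) * (0, χ, 1) * (x, 1, 1) : Heis G) = (0, χ, χ x) := by
    simp [one_mul χ, mul_one χ]
  rw [← Module.End.mul_apply, ← Module.End.mul_apply, ← map_mul, ← map_mul, h,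
    map_mk_eq_smul hz]

lemma map_map_translation_of_forall_map_modulation_eq {w : W}
    (hw : ∀ χ : AddChar G ℂˣ, σ (0, χ, 1) w = w) (g : Heis G) (x : G) :
    σ g (σ (x, 1, 1) w) = ((g.2.2 : ℂ) * (g.2.1 x : ℂ)) • σ (x + g.1, 1, 1) w := by
  obtain ⟨x', χ', z'⟩ := g
  have hg : ((x', χ', z') * (x, 1, 1) : Heis G) =
      (0, 1, z' * χ' x) * (x + x', 1, 1) * (0, χ', 1) := by
    simp [add_comm, one_mul χ', mul_one χ', mul_one (1 : AddChar G ℂˣ)]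
  rw [← Module.End.mul_apply, ← map_mul, hg, map_mul, map_mul, Module.End.mul_apply,
    Module.End.mul_apply, hw, hz]
  push_cast
  rfl

end CentralCharacter

section Averaging

variable [Fintype (AddChar G ℂˣ)]

def modulationSum : Module.End ℂ W := ∑ χ : AddChar G ℂˣ, σ (0, χ, 1)

lemma map_modulation_modulationSum (χ : AddChar G ℂˣ) (w : W) :
    σ (0, χ, 1) (modulationSum σ w) = modulationSum σ w := by
  simp only [modulationSum, LinearMap.sum_apply, map_sum, map_modulation_map_modulation]
  exact Fintype.sum_equiv (Equiv.mulLeft χ) _ _ fun _ ↦ rfl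

variable [Fintype G] {σ} (hz : ∀ (z : ℂˣ) (w : W), σ (0, 1, z) w = (z : ℂ) • w)
include hz

lemma sum_map_translation_neg_modulationSum (w : W) :
    ∑ x : G, σ (-x, 1, 1) (modulationSum σ (σ (x, 1, 1) w)) = (Fintype.card G : ℂ) • w :=
  calc ∑ x : G, σ (-x, 1, 1) (modulationSum σ (σ (x, 1, 1) w))
      = ∑ χ : AddChar G ℂˣ, (∑ x : G, (χ x : ℂ)) • σ (0, χ, 1) w := by
        simp only [modulationSum, LinearMap.sum_apply, map_sum,
          map_translation_neg_map_modulation_map_translation hz, Finset.sum_smul]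
        exact Finset.sum_comm
    _ = (∑ x : G, ((1 : AddChar G ℂˣ) x : ℂ)) • σ 1 w :=
        Fintype.sum_eq_single 1 fun χ hχ ↦ by rw [AddChar.sum_coe_units_eq_zero hχ, zero_smul]
    _ = (Fintype.card G : ℂ) • w := by simp

lemma exists_ne_zero_mem_forall_map_modulation_eq {U : Submodule ℂ W}
    (hU : ∀ (g : Heis G) (w : W), w ∈ U → σ g w ∈ U) (hU₀ : U ≠ ⊥) :
    ∃ w ∈ U, w ≠ 0 ∧ ∀ χ : AddChar G ℂˣ, σ (0, χ, 1) w = w := by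
  obtain ⟨w, hwU, hw⟩ := Submodule.exists_mem_ne_zero_of_ne_bot hU₀
  obtain ⟨x, hx⟩ : ∃ x : G, modulationSum σ (σ (x, 1, 1) w) ≠ 0 := by
    by_contra! h
    have hG : (Fintype.card G : ℂ) ≠ 0 := Nat.cast_ne_zero.2 Fintype.card_ne_zero
    apply smul_ne_zero hG hw
    simp [← sum_map_translation_neg_modulationSum hz, h]
  refine ⟨_, ?_, hx, fun χ ↦ map_modulation_modulationSum σ χ _⟩
  simp only [modulationSum, LinearMap.sum_apply]
  exact Submodule.sum_mem _ fun χ _ ↦ hU _ _ (hU _ _ hwU)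

end Averaging

end Heis

section HeisRep

variable {G : Type} [AddCommGroup G]

lemma heisRep_apply (g : Heis G) (f : G → ℂ) (x : G) :
    heisRep G g f x = g.2.2 * g.2.1 (x - g.1) * f (x - g.1) := rfl

lemma heisRep_center (z : ℂˣ) (f : G → ℂ) : heisRep G (0, 1, z) f = (z : ℂ) • f := by
  ext; simp [heisRep_apply]

lemma heisRep_translation_single [DecidableEq G] (x : G) (c : ℂ) :
    heisRep G (x, 1, 1) (Pi.single 0 c) = Pi.single x c := by
  ext y; simp [heisRep_apply, Pi.single_apply, sub_eq_zero]

lemma eq_single_of_forall_heisRep_modulation_eq [Finite G] [DecidableEq G] {f : G → ℂ}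
    (hf : ∀ χ : AddChar G ℂˣ, heisRep G (0, χ, 1) f = f) : f = Pi.single 0 (f 0) := by
  ext y
  rcases eq_or_ne y 0 with rfl | hy
  · simp
  obtain ⟨χ, hχ⟩ := AddChar.exists_units_apply_ne_one (M := ℂ) hy
  have hfy := congr_fun (hf χ) y
  simp only [heisRep_apply, sub_zero, Units.val_one, one_mul] at hfy
  rw [Pi.single_eq_of_ne hy]
  by_contra hfy₀
  exact hχ (Units.val_eq_one.1 ((mul_eq_right₀ hfy₀).1 hfy))

theorem heisRep_isIrrep [Finite G] : IsIrrep (heisRep G) := by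
  classical
  cases nonempty_fintype G
  have := Fintype.ofFinite (AddChar G ℂˣ)
  refine ⟨⟨Pi.single 0 1, by simp⟩, fun U hU ↦ or_iff_not_imp_left.2 fun hU₀ ↦ ?_⟩
  obtain ⟨f, hfU, hf, hfix⟩ :=
    Heis.exists_ne_zero_mem_forall_map_modulation_eq heisRep_center hU hU₀
  obtain ⟨a, rfl⟩ : ∃ a, f = Pi.single 0 a :=
    ⟨_, eq_single_of_forall_heisRep_modulation_eq hfix⟩
  have ha : a ≠ 0 := by rintro rfl; simp at hf
  have hsingle : ∀ x c, Pi.single x c ∈ U := fun x c ↦ by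
    convert hU (x, 1, 1) _ (U.smul_mem (c / a) hfU) using 1
    rw [map_smul, heisRep_translation_single, ← Pi.single_smul, smul_eq_mul,
      div_mul_cancel₀ _ ha]
  refine eq_top_iff.2 fun g _ ↦ ?_
  rw [← Finset.univ_sum_single g]
  exact U.sum_mem fun x _ ↦ hsingle x (g x)

end HeisRep

lemma Heis.linearCombination_heisRep {G W : Type} [AddCommGroup G] [Fintype G]
    [AddCommGroup W] [Module ℂ W] {σ : Representation ℂ (Heis G) W}
    (hz : ∀ (z : ℂˣ) (w : W), σ (0, 1, z) w = (z : ℂ) • w) {w : W}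
    (hw : ∀ χ : AddChar G ℂˣ, σ (0, χ, 1) w = w) (g : Heis G) (f : G → ℂ) :
    Fintype.linearCombination ℂ (fun x ↦ σ (x, 1, 1) w) (heisRep G g f) =
      σ g (Fintype.linearCombination ℂ (fun x ↦ σ (x, 1, 1) w) f) := by
  simp only [Fintype.linearCombination_apply, map_sum, map_smul,
    map_map_translation_of_forall_map_modulation_eq hz hw, smul_smul]
  refine (Fintype.sum_equiv (Equiv.addRight g.1) _ _ fun x ↦ ?_).symm
  simp only [Equiv.coe_addRight, heisRep_apply, add_sub_cancel_right]
  ring_nf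

/-- Stone–von Neumann for finite abelian groups: the Heisenberg representation is
irreducible, and every irreducible representation of `H(G)` on which the centre
acts by the identity character (`σ (0,1,z) = z • id`) is isomorphic to it. -/
theorem heisenberg_irreducible_unique (G : Type) [AddCommGroup G] [Finite G]
    (W : Type) [AddCommGroup W] [Module ℂ W] (σ : Representation ℂ (Heis G) W) :
    IsIrrep (heisRep G) ∧
    (IsIrrep σ → (∀ (z : ℂˣ) (w : W), σ (0, 1, z) w = (z : ℂ) • w) →
      ∃ e : W ≃ₗ[ℂ] (G → ℂ),
        ∀ (g : Heis G) (w : W), e (σ g w) = heisRep G g (e w)) := by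
  refine ⟨heisRep_isIrrep, fun hσ hz ↦ ?_⟩
  classical
  cases nonempty_fintype G
  have := Fintype.ofFinite (AddChar G ℂˣ)
  obtain ⟨v, hv⟩ := hσ.1
  obtain ⟨w₀, -, hw₀, hfix⟩ := Heis.exists_ne_zero_mem_forall_map_modulation_eq hz
    (U := ⊤) (fun _ _ _ ↦ trivial) ((Submodule.ne_bot_iff ⊤).2 ⟨v, trivial, hv⟩)
  set E := Fintype.linearCombination ℂ (fun x ↦ σ (x, 1, 1) w₀)
  have hE := Heis.linearCombination_heisRep hz hfix
  have hE₀ : E ≠ 0 := fun h ↦ hw₀ <| by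
    simpa [E, hfix 1] using LinearMap.congr_fun h (Pi.single 0 1)
  let e := LinearEquiv.ofBijective E (heisRep_isIrrep.bijective_of_intertwining hσ hE hE₀)
  refine ⟨e.symm, fun g w ↦ e.symm_apply_eq.2 ?_⟩
  change σ g w = E (heisRep G g (e.symm w))
  rw [hE]
  exact congrArg (σ g) (e.apply_symm_apply w).symm
end

section
/- Every irreducible cuspidal representation of GL_2(F_q) has degree divisible by q - 1. -/
open Matrix

/-- Extension of a character of `F_q*` to `F_q` by zero. -/
noncomputable def extChar {F : Type} [Field F] (χ : Fˣ →* ℂˣ) (a : F) : ℂ :=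
  by classical exact if h : IsUnit a then (χ h.unit : ℂ) else 0

/-- A representation `ρ` of `GL₂(F_q)` is cuspidal if
`Hom(ρ, I(χ₁, χ₂)) = 0` for all characters `χ₁, χ₂` of `F_q*`, where
`I(χ₁, χ₂)` is the representation parabolically induced from the character
`[[y₁, *], [0, y₂]] ↦ χ₁ y₁ * χ₂ y₂` of the Borel subgroup, with the group acting
by right translation. -/
def IsCuspidal {F : Type} [Field F] {V : Type} [AddCommGroup V] [Module ℂ V]
    (ρ : Representation ℂ (GL (Fin 2) F) V) : Prop :=
  ∀ (χ₁ χ₂ : Fˣ →* ℂˣ) (φ : V →ₗ[ℂ] (GL (Fin 2) F → ℂ)),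
    (∀ (v : V) (b g : GL (Fin 2) F), (b : Matrix (Fin 2) (Fin 2) F) 1 0 = 0 →
      φ v (b * g) =
        extChar χ₁ ((b : Matrix (Fin 2) (Fin 2) F) 0 0) *
          extChar χ₂ ((b : Matrix (Fin 2) (Fin 2) F) 1 1) * φ v g) →
    (∀ (g : GL (Fin 2) F) (v : V) (x : GL (Fin 2) F), φ (ρ g v) x = φ v (x * g)) →
    φ = 0


/-!
Restrict `ρ` to the unipotent subgroup `N ≅ F` and cut `V` into the isotypic pieces `V_ψ`, one
for each additive character `ψ` of `F`, by the projectors `P_ψ = q⁻¹ ∑ₓ ψ(x)⁻¹ ρ(n(x))`.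
Cuspidality kills `V_1`: a nonzero `N`-invariant functional, averaged against a suitable character
of the diagonal torus, becomes a nonzero element of `Hom_B(V, χ₁ ⊗ χ₂)`, i.e. (Frobenius
reciprocity) a nonzero map `V → I(χ₁, χ₂)`. Conjugation by `diag(u⁻¹, 1)` carries `P_ψ` to
`P_{ψ(u ·)}`, and `Fˣ` acts transitively on the nontrivial characters, so all `V_ψ` with `ψ ≠ 1`
have the same dimension `r`; taking traces, `dim V = (q - 1) r`.
-/

open Finset Module Matrix.GeneralLinearGroup

namespace AddChar

variable {A R : Type*} [AddCommGroup A] [Fintype A] [Ring R] [Algebra ℂ R]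
  (σ : AddChar A R)

noncomputable def isotypicProj (ψ : AddChar A ℂ) : R :=
  (Fintype.card A : ℂ)⁻¹ • ∑ x, (ψ x)⁻¹ • σ x

lemma isotypicProj_mul (ψ : AddChar A ℂ) (y : A) :
    σ.isotypicProj ψ * σ y = ψ y • σ.isotypicProj ψ := by
  have key : (∑ x, (ψ x)⁻¹ • σ x) * σ y = ψ y • ∑ x, (ψ x)⁻¹ • σ x := by
    rw [sum_mul, smul_sum]
    apply Fintype.sum_equiv (Equiv.addRight y)
    intro x
    simp only [Equiv.coe_addRight, smul_mul_assoc, ← map_add_eq_mul, smul_smul]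
    rw [map_add_eq_mul ψ, mul_inv, mul_comm (ψ x)⁻¹, (ψ.val_isUnit y).mul_inv_cancel_left]
  rw [isotypicProj, smul_mul_assoc, key, smul_comm]

lemma isIdempotentElem_isotypicProj (ψ : AddChar A ℂ) :
    IsIdempotentElem (σ.isotypicProj ψ) := by
  rw [IsIdempotentElem]
  nth_rw 2 [isotypicProj]
  rw [mul_smul_comm, mul_sum]
  simp only [mul_smul_comm, isotypicProj_mul, smul_smul, inv_mul_cancel₀ (ψ.val_isUnit _).ne_zero,
    one_smul, sum_const, card_univ, ← Nat.cast_smul_eq_nsmul ℂ]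
  rw [inv_mul_cancel₀ (Nat.cast_ne_zero.2 Fintype.card_ne_zero), one_smul]

lemma sum_isotypicProj : ∑ ψ : AddChar A ℂ, σ.isotypicProj ψ = 1 := by
  classical
  simp only [isotypicProj, ← smul_sum, sum_comm (γ := AddChar A ℂ), ← sum_smul, ← map_neg_eq_inv,
    sum_apply_eq_ite, neg_eq_zero, ite_smul, zero_smul, sum_ite_eq', mem_univ, if_true,
    map_zero_eq_one]
  rw [smul_smul, inv_mul_cancel₀ (Nat.cast_ne_zero.2 Fintype.card_ne_zero), one_smul]

lemma units_mul_isotypicProj_mul_inv (g : Rˣ) (e : A ≃ A)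
    (hσ : ∀ x, g * σ x * ↑g⁻¹ = σ (e x)) {ψ ψ' : AddChar A ℂ} (hψ : ∀ x, ψ x = ψ' (e x)) :
    g * σ.isotypicProj ψ * ↑g⁻¹ = σ.isotypicProj ψ' := by
  rw [isotypicProj, isotypicProj, mul_smul_comm, smul_mul_assoc, mul_sum, sum_mul]
  congr 1
  apply Fintype.sum_equiv e
  intro x
  rw [mul_smul_comm, smul_mul_assoc, hσ, hψ]

lemma exists_mulShift_eq {K : Type*} [Field K] [Fintype K] {ψ₀ : AddChar K ℂ} (hψ₀ : ψ₀ ≠ 1)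
    (ψ : AddChar K ℂ) : ∃ a, ψ₀.mulShift a = ψ :=
  ((Fintype.bijective_iff_injective_and_card _).2
    ⟨to_mulShift_inj_of_isPrimitive (IsPrimitive.of_ne_one hψ₀), card_eq.symm⟩).2 ψ

end AddChar

namespace Matrix.GeneralLinearGroup

variable {F : Type*} [Field F]

def diagonalHom : Fˣ × Fˣ →* GL (Fin 2) F where
  toFun t := ⟨!![(t.1 : F), 0; 0, t.2], !![((t.1⁻¹ : Fˣ) : F), 0; 0, (t.2⁻¹ : Fˣ)],
    by simp [one_fin_two], by simp [one_fin_two]⟩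
  map_one' := by ext : 1; simp [one_fin_two]
  map_mul' s t := by ext : 1; simp

@[simp] lemma diagonalHom_apply (t : Fˣ × Fˣ) :
    (diagonalHom t : Matrix (Fin 2) (Fin 2) F) = !![(t.1 : F), 0; 0, t.2] := rfl

lemma diagonalHom_mul_upperRightHom (t : Fˣ × Fˣ) (x : F) :
    diagonalHom t * upperRightHom x = upperRightHom (t.1 * x * t.2⁻¹) * diagonalHom t := by
  ext : 1; simp

lemma exists_eq_diagonalHom_mul_upperRightHom (b : GL (Fin 2) F)
    (hb : (b : Matrix (Fin 2) (Fin 2) F) 1 0 = 0) :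
    ∃ t x, b = diagonalHom t * upperRightHom x := by
  have hdet : (b : Matrix (Fin 2) (Fin 2) F) 0 0 * (b : Matrix (Fin 2) (Fin 2) F) 1 1 ≠ 0 := by
    simpa [det_fin_two, hb] using b.det_ne_zero
  refine ⟨(Units.mk0 _ (left_ne_zero_of_mul hdet), Units.mk0 _ (right_ne_zero_of_mul hdet)),
    ((b : Matrix (Fin 2) (Fin 2) F) 0 0)⁻¹ * (b : Matrix (Fin 2) (Fin 2) F) 0 1, ?_⟩
  ext i j
  fin_cases i <;> fin_cases j <;> simp [hb, left_ne_zero_of_mul hdet]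

end Matrix.GeneralLinearGroup

lemma extChar_coe {F : Type} [Field F] (χ : Fˣ →* ℂˣ) (u : Fˣ) : extChar χ (u : F) = χ u := by
  simp [extChar]

section Cuspidal

variable {F : Type} [Field F] {V : Type} [AddCommGroup V] [Module ℂ V]
  {ρ : Representation ℂ (GL (Fin 2) F) V}

lemma IsCuspidal.eq_zero_of_borel_covariant (hcusp : IsCuspidal ρ) (χ₁ χ₂ : Fˣ →* ℂˣ)
    (m : Dual ℂ V) (hm : ∀ (b : GL (Fin 2) F) (v : V), (b : Matrix (Fin 2) (Fin 2) F) 1 0 = 0 →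
      m (ρ b v) = extChar χ₁ ((b : Matrix (Fin 2) (Fin 2) F) 0 0) *
        extChar χ₂ ((b : Matrix (Fin 2) (Fin 2) F) 1 1) * m v) :
    m = 0 := by
  have hφ := hcusp χ₁ χ₂ (LinearMap.pi fun g => m ∘ₗ ρ g)
    (fun v b g hb => by simpa [map_mul] using hm b (ρ g v) hb)
    (fun g v x => by simp [map_mul])
  ext v
  simpa using congr_fun (LinearMap.congr_fun hφ v) 1

lemma borel_covariant_of_torus_covariant (χ₁ χ₂ : Fˣ →* ℂˣ) (m : Dual ℂ V)
    (hN : ∀ x, m ∘ₗ ρ (upperRightHom x) = m)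
    (hT : ∀ t v, m (ρ (diagonalHom t) v) = χ₁ t.1 * χ₂ t.2 * m v)
    (b : GL (Fin 2) F) (v : V) (hb : (b : Matrix (Fin 2) (Fin 2) F) 1 0 = 0) :
    m (ρ b v) = extChar χ₁ ((b : Matrix (Fin 2) (Fin 2) F) 0 0) *
        extChar χ₂ ((b : Matrix (Fin 2) (Fin 2) F) 1 1) * m v := by
  obtain ⟨t, x, rfl⟩ := exists_eq_diagonalHom_mul_upperRightHom b hb
  have h₀₀ : ((diagonalHom t * upperRightHom x : GL (Fin 2) F) : Matrix (Fin 2) (Fin 2) F) 0 0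
      = t.1 := by simp
  have h₁₁ : ((diagonalHom t * upperRightHom x : GL (Fin 2) F) : Matrix (Fin 2) (Fin 2) F) 1 1
      = t.2 := by simp
  rw [h₀₀, h₁₁, extChar_coe, extChar_coe, map_mul, Module.End.mul_apply, hT,
    ← LinearMap.comp_apply m, hN]

lemma exists_torus_covariant_of_unipotent_invariant [Fintype F] (ℓ : Dual ℂ V) (hℓ : ℓ ≠ 0)
    (hN : ∀ x, ℓ ∘ₗ ρ (upperRightHom x) = ℓ) :
    ∃ (χ₁ χ₂ : Fˣ →* ℂˣ) (m : Dual ℂ V), m ≠ 0 ∧ (∀ x, m ∘ₗ ρ (upperRightHom x) = m) ∧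
      ∀ t v, m (ρ (diagonalHom t) v) = χ₁ t.1 * χ₂ t.2 * m v := by
  classical
  -- the torus, viewed additively, so that its isotypic projectors are available
  set τ : AddChar (Additive (Fˣ × Fˣ)) (Module.End ℂ V) :=
    ρ.compAddChar (AddChar.toMonoidHomEquiv.symm diagonalHom)
  have hsum : ∑ ψ, ℓ ∘ₗ τ.isotypicProj ψ = ℓ := by
    ext v
    simp [← LinearMap.sum_apply, ← map_sum, AddChar.sum_isotypicProj]
  obtain ⟨ψ, -, hψ⟩ := exists_ne_zero_of_sum_ne_zero (hsum ▸ hℓ)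
  let ω : Fˣ × Fˣ →* ℂ := ψ.toMonoidHom
  refine ⟨(ω.comp (MonoidHom.inl _ _)).toHomUnits, (ω.comp (MonoidHom.inr _ _)).toHomUnits,
    ℓ ∘ₗ τ.isotypicProj ψ, hψ, fun x => ?_, fun t v => ?_⟩
  · -- the torus normalizes `N`, so each `ℓ ∘ ρ(t)` is again `N`-invariant
    have key : ∀ t v, ℓ (τ t (ρ (upperRightHom x) v)) = ℓ (τ t v) := fun t v => by
      change ℓ ((ρ (diagonalHom t.toMul) * ρ (upperRightHom x)) v) = _
      rw [← map_mul, diagonalHom_mul_upperRightHom, map_mul, Module.End.mul_apply,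
        ← LinearMap.comp_apply ℓ, hN]
      rfl
    ext v
    simp [AddChar.isotypicProj, key, -upperRightHom_apply]
  · have h := congrArg (fun f => ℓ (f v)) (τ.isotypicProj_mul ψ (Additive.ofMul t))
    have hω : ψ (Additive.ofMul t) = ω (t.1, 1) * ω (1, t.2) := by
      rw [← map_mul, Prod.mk_mul_mk, mul_one, one_mul]
      rfl
    rw [hω, Module.End.mul_apply, LinearMap.smul_apply, map_smul, smul_eq_mul] at h
    exact h

lemma IsCuspidal.eq_zero_of_unipotent_invariant [Fintype F] (hcusp : IsCuspidal ρ)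
    (ℓ : Dual ℂ V) (hN : ∀ x, ℓ ∘ₗ ρ (upperRightHom x) = ℓ) : ℓ = 0 := by
  by_contra hℓ
  obtain ⟨χ₁, χ₂, m, hm, hmN, hmT⟩ := exists_torus_covariant_of_unipotent_invariant ℓ hℓ hN
  exact hm (hcusp.eq_zero_of_borel_covariant χ₁ χ₂ m
    (borel_covariant_of_torus_covariant χ₁ χ₂ m hmN hmT))

lemma IsCuspidal.isotypicProj_one_eq_zero [Fintype F] (hcusp : IsCuspidal ρ) :
    (ρ.compAddChar upperRightHom).isotypicProj 1 = 0 := by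
  have hP : ∀ ℓ : Dual ℂ V, ℓ ∘ₗ (ρ.compAddChar upperRightHom).isotypicProj 1 = 0 := fun ℓ =>
    hcusp.eq_zero_of_unipotent_invariant _ fun x => by
      have h := (ρ.compAddChar upperRightHom).isotypicProj_mul 1 x
      rw [AddChar.one_apply, one_smul] at h
      rw [LinearMap.comp_assoc, ← Module.End.mul_eq_comp]
      exact congrArg (ℓ ∘ₗ ·) h
  ext v
  rw [LinearMap.zero_apply, ← Module.forall_dual_apply_eq_zero_iff ℂ]
  exact fun ℓ => LinearMap.congr_fun (hP ℓ) v

end Cuspidal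

section Trace

variable {F : Type} [Field F] [Fintype F] {V : Type} [AddCommGroup V] [Module ℂ V]
  (ρ : Representation ℂ (GL (Fin 2) F) V)

lemma trace_isotypicProj_mulShift (ψ : AddChar F ℂ) (u : Fˣ) :
    LinearMap.trace ℂ V ((ρ.compAddChar upperRightHom).isotypicProj (ψ.mulShift u)) =
      LinearMap.trace ℂ V ((ρ.compAddChar upperRightHom).isotypicProj ψ) := by
  set g := ρ.toHomUnits (diagonalHom (u⁻¹, 1))
  have hconj : ∀ x, (g : Module.End ℂ V) * ρ (upperRightHom x) * ↑g⁻¹ =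
      ρ (upperRightHom (Units.mulLeft u⁻¹ x)) := fun x => by
    rw [← map_inv, MonoidHom.coe_toHomUnits, MonoidHom.coe_toHomUnits, ← map_mul, ← map_mul,
      diagonalHom_mul_upperRightHom, mul_inv_cancel_right]
    simp
  rw [← (ρ.compAddChar upperRightHom).units_mul_isotypicProj_mul_inv g _ hconj
    (ψ := ψ) (ψ' := ψ.mulShift u) (fun x => by simp), LinearMap.trace_conj]

lemma trace_isotypicProj_eq_of_ne_one {ψ₀ ψ : AddChar F ℂ} (hψ₀ : ψ₀ ≠ 1) (hψ : ψ ≠ 1) :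
    LinearMap.trace ℂ V ((ρ.compAddChar upperRightHom).isotypicProj ψ) =
      LinearMap.trace ℂ V ((ρ.compAddChar upperRightHom).isotypicProj ψ₀) := by
  obtain ⟨a, rfl⟩ := AddChar.exists_mulShift_eq hψ₀ ψ
  have ha : a ≠ 0 := by
    rintro rfl
    exact hψ (AddChar.mulShift_zero ψ₀)
  exact trace_isotypicProj_mulShift ρ ψ₀ (Units.mk0 a ha)

end Trace

theorem cuspidal_degree_dvd_general (F : Type) [Field F] [Fintype F] (V : Type)
    [AddCommGroup V] [Module ℂ V] [FiniteDimensional ℂ V]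
    (ρ : Representation ℂ (GL (Fin 2) F) V)
    (hcusp : IsCuspidal ρ) :
    (Fintype.card F - 1) ∣ Module.finrank ℂ V := by
  classical
  set σ := ρ.compAddChar upperRightHom
  obtain ⟨ψ₀, hψ₀⟩ : ∃ ψ : AddChar F ℂ, ψ ≠ 1 := by
    obtain ⟨ψ, hψ⟩ := AddChar.exists_apply_ne_zero.2 (one_ne_zero' F)
    exact ⟨ψ, AddChar.ne_one_iff.2 ⟨1, hψ⟩⟩
  set r := finrank ℂ (LinearMap.range (σ.isotypicProj ψ₀))
  have htrace (ψ : AddChar F ℂ) :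
      LinearMap.trace ℂ V (σ.isotypicProj ψ) = if ψ = 1 then 0 else (r : ℂ) := by
    split_ifs with hψ
    · rw [hψ, hcusp.isotypicProj_one_eq_zero, map_zero]
    · rw [trace_isotypicProj_eq_of_ne_one ρ hψ₀ hψ,
        ((LinearMap.isProj_range_iff_isIdempotentElem _).2
          (σ.isIdempotentElem_isotypicProj ψ₀)).trace]
  have hdim : (finrank ℂ V : ℂ) = ((Fintype.card F - 1) * r : ℕ) := by
    rw [← LinearMap.trace_id, ← Module.End.one_eq_id, ← σ.sum_isotypicProj, map_sum]
    simp [htrace, Finset.sum_ite, Finset.filter_ne', AddChar.card_eq]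
  exact ⟨r, Nat.cast_injective hdim⟩

/-- Every irreducible cuspidal representation of `GL₂(F_q)` has degree divisible
by `q - 1`. -/
theorem cuspidal_degree_dvd (F : Type) [Field F] [Fintype F] (V : Type)
    [AddCommGroup V] [Module ℂ V] [FiniteDimensional ℂ V]
    (ρ : Representation ℂ (GL (Fin 2) F) V) (hirr : IsIrrep ρ)
    (hcusp : IsCuspidal ρ) :
    (Fintype.card F - 1) ∣ Module.finrank ℂ V :=
  cuspidal_degree_dvd_general F V ρ hcusp
end
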